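/- Let φ : ℂ → ℝ be C⁴-smooth with Δφ > 0 everywhere and (1/Δφ)·Δ log Δφ ≥ -2 on ℂ. If F is an entire function with ∫_ℂ |F|² e^{2φ} Δφ dA < ∞, then F ≡ 0. -/

import Mathlib

open MeasureTheory Complex Real Filter Topology

/-- Wirtinger derivative ∂̄ = (∂ₓ + i ∂_y)/2. -/
noncomputable def dbar (f : ℂ → ℂ) (z : ℂ) : ℂ :=
  (fderiv ℝ f z 1 + Complex.I * fderiv ℝ f z Complex.I) / 2

/-- Wirtinger derivative ∂ = (∂ₓ - i ∂_y)/2. -/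
noncomputable def dee (f : ℂ → ℂ) (z : ℂ) : ℂ :=
  (fderiv ℝ f z 1 - Complex.I * fderiv ℝ f z Complex.I) / 2

/-- ∂̄ applied to a real-valued function (viewed as complex-valued). -/
noncomputable def dbarR (φ : ℂ → ℝ) (z : ℂ) : ℂ := dbar (fun w => (φ w : ℂ)) z

/-- ∂ applied to a real-valued function (viewed as complex-valued). -/
noncomputable def deeR (φ : ℂ → ℝ) (z : ℂ) : ℂ := dee (fun w => (φ w : ℂ)) z

/-- Normalized Laplacian Δ̂ = (∂ₓ² + ∂_y²)/4. -/
noncomputable def lapHat (φ : ℂ → ℝ) (z : ℂ) : ℝ :=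
  (fderiv ℝ (fun w => fderiv ℝ φ w 1) z 1 +
   fderiv ℝ (fun w => fderiv ℝ φ w Complex.I) z Complex.I) / 4

/-- `u` solves `∂̄ u = f` in the sense of distributions. -/
def IsDbarSol (u f : ℂ → ℂ) : Prop :=
  ∀ ψ : ℂ → ℂ, ContDiff ℝ (⊤ : ℕ∞) ψ → HasCompactSupport ψ →
    ∫ z : ℂ, f z * ψ z = -∫ z : ℂ, u z * dbar ψ z

section Aux

variable {E : Type*} [NormedAddCommGroup E] [NormedSpace ℝ E]

lemma cd_fderiv_apply {n : WithTop ℕ∞} {f : ℂ → E} (hf : ContDiff ℝ (n+1) f) (v : ℂ) :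
    ContDiff ℝ n (fun z => fderiv ℝ f z v) :=
  (hf.fderiv_right le_rfl).clm_apply contDiff_const

lemma fderiv_ofReal_comp {w : ℂ → ℝ} {z : ℂ} (hw : DifferentiableAt ℝ w z) (v : ℂ) :
    fderiv ℝ (fun y => ((w y : ℝ) : ℂ)) z v = ((fderiv ℝ w z v : ℝ) : ℂ) := by
  have : fderiv ℝ (fun y => ((w y : ℝ) : ℂ)) z = Complex.ofRealCLM.comp (fderiv ℝ w z) :=
    (Complex.ofRealCLM.hasFDerivAt.comp z hw.hasFDerivAt).fderiv
  rw [this]; rfl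

lemma fderiv_conj_comp {f : ℂ → ℂ} {z : ℂ} (hf : DifferentiableAt ℝ f z) (v : ℂ) :
    fderiv ℝ (fun y => (starRingEnd ℂ) (f y)) z v = (starRingEnd ℂ) (fderiv ℝ f z v) := by
  have : fderiv ℝ (fun y => (starRingEnd ℂ) (f y)) z
      = (Complex.conjCLE.toContinuousLinearMap).comp (fderiv ℝ f z) :=
    (Complex.conjCLE.toContinuousLinearMap.hasFDerivAt.comp z hf.hasFDerivAt).fderiv
  rw [this]; rfl

lemma dbar_conj {f : ℂ → ℂ} {z : ℂ} (hf : DifferentiableAt ℝ f z) :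
    dbar (fun y => (starRingEnd ℂ) (f y)) z = (starRingEnd ℂ) (dee f z) := by
  simp only [dbar, dee, fderiv_conj_comp hf]
  simp [map_sub, map_mul, Complex.conj_I, map_ofNat]

lemma dee_conj {f : ℂ → ℂ} {z : ℂ} (hf : DifferentiableAt ℝ f z) :
    dee (fun y => (starRingEnd ℂ) (f y)) z = (starRingEnd ℂ) (dbar f z) := by
  simp only [dbar, dee, fderiv_conj_comp hf]
  simp [map_add, map_mul, Complex.conj_I, map_ofNat]
  ring

lemma dbar_mul {f g : ℂ → ℂ} {z : ℂ} (hf : DifferentiableAt ℝ f z)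
    (hg : DifferentiableAt ℝ g z) :
    dbar (fun y => f y * g y) z = f z * dbar g z + g z * dbar f z := by
  simp only [dbar, fderiv_fun_mul hf hg, ContinuousLinearMap.add_apply,
    ContinuousLinearMap.smul_apply, smul_eq_mul]
  ring

lemma dee_mul {f g : ℂ → ℂ} {z : ℂ} (hf : DifferentiableAt ℝ f z)
    (hg : DifferentiableAt ℝ g z) :
    dee (fun y => f y * g y) z = f z * dee g z + g z * dee f z := by
  simp only [dee, fderiv_fun_mul hf hg, ContinuousLinearMap.add_apply,
    ContinuousLinearMap.smul_apply, smul_eq_mul]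
  ring

lemma dbar_holo {F : ℂ → ℂ} {z : ℂ} (hF : DifferentiableAt ℂ F z) : dbar F z = 0 := by
  have h := (hF.hasFDerivAt.restrictScalars ℝ).fderiv
  simp only [dbar, h]
  have h1 : (fderiv ℂ F z).restrictScalars ℝ Complex.I
      = Complex.I * (fderiv ℂ F z).restrictScalars ℝ 1 := by
    have := (fderiv ℂ F z).map_smul Complex.I (1 : ℂ)
    simpa [smul_eq_mul] using this
  rw [h1]
  have : Complex.I * (Complex.I * (fderiv ℂ F z).restrictScalars ℝ 1)
      = -((fderiv ℂ F z).restrictScalars ℝ 1) := by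
    rw [← mul_assoc, Complex.I_mul_I]; ring
  rw [this]; ring

lemma dee_holo {F : ℂ → ℂ} {z : ℂ} (hF : DifferentiableAt ℂ F z) : dee F z = deriv F z := by
  have h := (hF.hasFDerivAt.restrictScalars ℝ).fderiv
  simp only [dee, h]
  have h1 : (fderiv ℂ F z).restrictScalars ℝ Complex.I
      = Complex.I * (fderiv ℂ F z).restrictScalars ℝ 1 := by
    have := (fderiv ℂ F z).map_smul Complex.I (1 : ℂ)
    simpa [smul_eq_mul] using this
  rw [h1]
  have h2 : (fderiv ℂ F z).restrictScalars ℝ 1 = deriv F z := by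
    simp [ContinuousLinearMap.coe_restrictScalars', fderiv_apply_one_eq_deriv]
  have : Complex.I * (Complex.I * (fderiv ℂ F z).restrictScalars ℝ 1)
      = -((fderiv ℂ F z).restrictScalars ℝ 1) := by
    rw [← mul_assoc, Complex.I_mul_I]; ring
  rw [this, h2]; ring

lemma dbar_cexp {f : ℂ → ℂ} {z : ℂ} (hf : DifferentiableAt ℝ f z) :
    dbar (fun y => Complex.exp (f y)) z = Complex.exp (f z) * dbar f z := by
  have h := (hf.hasFDerivAt.cexp).fderiv
  simp only [dbar, h, ContinuousLinearMap.smul_apply, smul_eq_mul]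
  ring

lemma dee_cexp {f : ℂ → ℂ} {z : ℂ} (hf : DifferentiableAt ℝ f z) :
    dee (fun y => Complex.exp (f y)) z = Complex.exp (f z) * dee f z := by
  have h := (hf.hasFDerivAt.cexp).fderiv
  simp only [dee, h, ContinuousLinearMap.smul_apply, smul_eq_mul]
  ring

end Aux

section Aux2

lemma fderiv_symm {w : ℂ → ℝ} (hw : ContDiff ℝ 2 w) (z u v : ℂ) :
    fderiv ℝ (fun y => fderiv ℝ w y v) z u = fderiv ℝ (fun y => fderiv ℝ w y u) z v := by
  have hd : DifferentiableAt ℝ (fderiv ℝ w) z :=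
    ((hw.fderiv_right (m := 1) (by norm_num)).differentiable one_ne_zero).differentiableAt
  have h1 : ∀ a b : ℂ, fderiv ℝ (fun y => fderiv ℝ w y b) z a = fderiv ℝ (fderiv ℝ w) z a b := by
    intro a b
    rw [fderiv_clm_apply hd (differentiableAt_const b)]
    simp
  rw [h1, h1]
  exact (hw.contDiffAt.isSymmSndFDerivAt (by norm_num)).eq u v

lemma deeR_eq {w : ℂ → ℝ} (hw : Differentiable ℝ w) :
    deeR w = fun y =>
      (((fderiv ℝ w y 1 : ℝ) : ℂ) - Complex.I * ((fderiv ℝ w y Complex.I : ℝ) : ℂ)) / 2 :=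
  funext fun y => by simp [deeR, dee, fderiv_ofReal_comp (hw y)]

lemma dbarR_eq {w : ℂ → ℝ} (hw : Differentiable ℝ w) :
    dbarR w = fun y =>
      (((fderiv ℝ w y 1 : ℝ) : ℂ) + Complex.I * ((fderiv ℝ w y Complex.I : ℝ) : ℂ)) / 2 :=
  funext fun y => by simp [dbarR, dbar, fderiv_ofReal_comp (hw y)]

lemma contDiff_deeR {w : ℂ → ℝ} (hw : ContDiff ℝ 2 w) : ContDiff ℝ 1 (deeR w) := by
  rw [deeR_eq (hw.differentiable (by norm_num))]
  have h2 : (2 : WithTop ℕ∞) = 1 + 1 := by norm_num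
  exact ((Complex.ofRealCLM.contDiff.comp (cd_fderiv_apply (h2 ▸ hw) 1)).sub
    (contDiff_const.mul (Complex.ofRealCLM.contDiff.comp
      (cd_fderiv_apply (h2 ▸ hw) Complex.I)))).div_const 2

lemma dbar_deeR {w : ℂ → ℝ} (hw : ContDiff ℝ 2 w) (z : ℂ) :
    dbar (deeR w) z = ((lapHat w z : ℝ) : ℂ) := by
  have h2 : (2 : WithTop ℕ∞) = 1 + 1 := by norm_num
  have hwx : ContDiff ℝ 1 (fun y => fderiv ℝ w y 1) := cd_fderiv_apply (h2 ▸ hw) 1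
  have hwy : ContDiff ℝ 1 (fun y => fderiv ℝ w y Complex.I) := cd_fderiv_apply (h2 ▸ hw) Complex.I
  have hfd : ∀ v : ℂ, fderiv ℝ (deeR w) z v
      = (((fderiv ℝ (fun y => fderiv ℝ w y 1) z v : ℝ) : ℂ)
        - Complex.I * ((fderiv ℝ (fun y => fderiv ℝ w y Complex.I) z v : ℝ) : ℂ)) / 2 := by
    intro v
    rw [deeR_eq (hw.differentiable (by norm_num))]
    have d1 : DifferentiableAt ℝ (fun y => ((fderiv ℝ w y 1 : ℝ) : ℂ)) z :=
      Complex.ofRealCLM.differentiable.differentiableAt.comp z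
        (hwx.differentiable one_ne_zero).differentiableAt
    have d2 : DifferentiableAt ℝ (fun y => ((fderiv ℝ w y Complex.I : ℝ) : ℂ)) z :=
      Complex.ofRealCLM.differentiable.differentiableAt.comp z
        (hwy.differentiable one_ne_zero).differentiableAt
    rw [show (fun y => (((fderiv ℝ w y 1 : ℝ) : ℂ)
          - Complex.I * ((fderiv ℝ w y Complex.I : ℝ) : ℂ)) / 2)
        = fun y => (2:ℂ)⁻¹ * (((fderiv ℝ w y 1 : ℝ) : ℂ)
          - Complex.I * ((fderiv ℝ w y Complex.I : ℝ) : ℂ)) from funext fun y => by ring]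
    rw [fderiv_const_mul (a := fun y => ((fderiv ℝ w y 1 : ℝ) : ℂ) - Complex.I * ((fderiv ℝ w y Complex.I : ℝ) : ℂ)) (d1.sub (d2.const_mul _)), fderiv_fun_sub d1 (d2.const_mul _),
      fderiv_const_mul d2]
    simp only [ContinuousLinearMap.coe_sub', Pi.sub_apply, ContinuousLinearMap.coe_smul',
      Pi.smul_apply, smul_eq_mul]
    rw [fderiv_ofReal_comp (hwx.differentiable one_ne_zero).differentiableAt,
      fderiv_ofReal_comp (hwy.differentiable one_ne_zero).differentiableAt]
    ring
  simp only [dbar, hfd]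
  rw [fderiv_symm hw z 1 Complex.I]
  simp only [lapHat]
  push_cast
  have hI : Complex.I * Complex.I = -1 := Complex.I_mul_I
  linear_combination
    (-(((fderiv ℝ (fun y => fderiv ℝ w y Complex.I) z Complex.I : ℝ) : ℂ)) / 4) * hI

lemma dbarR_eq_conj {w : ℂ → ℝ} (hw : Differentiable ℝ w) (z : ℂ) :
    dbarR w z = (starRingEnd ℂ) (deeR w z) := by
  rw [deeR_eq hw, dbarR_eq hw]
  simp [map_sub, map_mul, Complex.conj_I, map_ofNat]

lemma dee_dbarR {G : ℂ → ℝ} (hG : ContDiff ℝ 2 G) (z : ℂ) :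
    dee (dbarR G) z = ((lapHat G z : ℝ) : ℂ) := by
  have h1 : dbarR G = fun y => (starRingEnd ℂ) (deeR G y) :=
    funext fun y => dbarR_eq_conj (hG.differentiable (by norm_num)) y
  rw [h1, dee_conj ((contDiff_deeR hG).differentiable one_ne_zero).differentiableAt,
    dbar_deeR hG z, Complex.conj_ofReal]

end Aux2
section Key

lemma dbar_add {f g : ℂ → ℂ} {z : ℂ} (hf : DifferentiableAt ℝ f z)
    (hg : DifferentiableAt ℝ g z) :
    dbar (fun y => f y + g y) z = dbar f z + dbar g z := by
  simp only [dbar, fderiv_fun_add hf hg, ContinuousLinearMap.add_apply]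
  ring

variable {w : ℂ → ℝ} {F : ℂ → ℂ}

lemma hG2_aux (hw : ContDiff ℝ 2 w) (hF : Differentiable ℂ F) :
    ContDiff ℝ 2 (fun y => ‖F y‖ ^ 2 * Real.exp (w y)) := by
  have hFC : ContDiff ℝ 2 F := (hF.contDiff (n := 2)).restrict_scalars ℝ
  have h1 : (fun y => ‖F y‖ ^ 2) = fun y => (F y * (starRingEnd ℂ) (F y)).re := by
    funext y
    rw [Complex.mul_conj, Complex.ofReal_re, Complex.sq_norm]
  have h2 : ContDiff ℝ 2 fun y => ‖F y‖ ^ 2 := by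
    rw [h1]
    exact Complex.reCLM.contDiff.comp
      (hFC.mul (Complex.conjCLE.toContinuousLinearMap.contDiff.comp hFC))
  exact h2.mul (Real.contDiff_exp.comp hw)

lemma key_dbar (hw : ContDiff ℝ 2 w) (hF : Differentiable ℂ F) (z : ℂ) :
    dbarR (fun y => ‖F y‖ ^ 2 * Real.exp (w y)) z
      = F z * Complex.exp ((w z : ℝ)) *
        (starRingEnd ℂ) (deriv F z + F z * deeR w z) := by
  have hwd : Differentiable ℝ w := hw.differentiable (by norm_num)
  have hFr : Differentiable ℝ F := hF.restrictScalars ℝ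
  have hWd : Differentiable ℝ (fun y => ((w y : ℝ) : ℂ)) :=
    Complex.ofRealCLM.differentiable.comp hwd
  have hexp : Differentiable ℝ (fun y => Complex.exp ((w y : ℝ) : ℂ)) :=
    fun y => (hWd y).cexp
  have hconjF : Differentiable ℝ (fun y => (starRingEnd ℂ) (F y)) :=
    Complex.conjCLE.toContinuousLinearMap.differentiable.comp hFr
  have hGc : (fun y => ((‖F y‖ ^ 2 * Real.exp (w y) : ℝ) : ℂ))
      = fun y => F y * (starRingEnd ℂ) (F y) * Complex.exp ((w y : ℝ) : ℂ) := by
    funext y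
    have hns : ‖F y‖ ^ 2 = Complex.normSq (F y) := by
      rw [Complex.sq_norm]
    rw [Complex.mul_conj, hns, Complex.ofReal_mul, Complex.ofReal_exp]
  unfold dbarR
  rw [hGc, dbar_mul (f := fun y => F y * (starRingEnd ℂ) (F y)) ((hFr z).mul (hconjF z)) (hexp z),
    dbar_mul (hFr z) (hconjF z), dbar_cexp (hWd z),
    dbar_holo (hF z), dbar_conj (hFr z), dee_holo (hF z)]
  have hbr : dbar (fun y => ((w y : ℝ) : ℂ)) z = (starRingEnd ℂ) (deeR w z) :=
    dbarR_eq_conj hwd z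
  rw [hbr]
  simp only [map_add, map_mul]
  ring

lemma key_lap (hw : ContDiff ℝ 2 w) (hF : Differentiable ℂ F) (z : ℂ) :
    lapHat (fun y => ‖F y‖ ^ 2 * Real.exp (w y)) z
      = Real.exp (w z) * (Complex.normSq (deriv F z + F z * deeR w z)
          + Complex.normSq (F z) * lapHat w z) := by
  have hwd : Differentiable ℝ w := hw.differentiable (by norm_num)
  have hFr : Differentiable ℝ F := hF.restrictScalars ℝ
  have hF' : Differentiable ℂ (deriv F) := by
    have hFtop : ContDiff ℂ 2 F := hF.contDiff
    have h2 : (2 : WithTop ℕ∞) = 1 + 1 := by norm_num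
    have : ContDiff ℂ 1 (fun z => fderiv ℂ F z 1) :=
      ((h2 ▸ hFtop).fderiv_right le_rfl).clm_apply contDiff_const
    have he : (fun z => fderiv ℂ F z 1) = deriv F := funext fun z => fderiv_apply_one_eq_deriv
    exact (he ▸ this).differentiable one_ne_zero
  have hF'r : Differentiable ℝ (deriv F) := hF'.restrictScalars ℝ
  have hWd : Differentiable ℝ (fun y => ((w y : ℝ) : ℂ)) :=
    Complex.ofRealCLM.differentiable.comp hwd
  have hexp : Differentiable ℝ (fun y => Complex.exp ((w y : ℝ) : ℂ)) :=
    fun y => (hWd y).cexp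
  have hdeeRd : Differentiable ℝ (deeR w) := (contDiff_deeR hw).differentiable one_ne_zero
  have hK : Differentiable ℝ (fun y => deriv F y + F y * deeR w y) :=
    hF'r.add (hFr.mul hdeeRd)
  have hG2 := hG2_aux hw hF
  have hstep := dee_dbarR hG2 z
  have hfun : dbarR (fun y => ‖F y‖ ^ 2 * Real.exp (w y))
      = fun y => F y * Complex.exp ((w y : ℝ)) *
        (starRingEnd ℂ) (deriv F y + F y * deeR w y) :=
    funext fun y => key_dbar hw hF y
  rw [hfun] at hstep
  have hconjK : Differentiable ℝ (fun y => (starRingEnd ℂ) (deriv F y + F y * deeR w y)) :=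
    Complex.conjCLE.toContinuousLinearMap.differentiable.comp hK
  rw [dee_mul (f := fun y => F y * Complex.exp ((w y : ℝ))) ((hFr z).mul (hexp z)) (hconjK z), dee_mul (hFr z) (hexp z),
    dee_cexp (hWd z), dee_holo (hF z), dee_conj (hK z),
    dbar_add (g := fun y => F y * deeR w y) (hF'r z) ((hFr z).mul (hdeeRd z)),
    dbar_holo (hF' z), dbar_mul (hFr z) (hdeeRd z), dbar_holo (hF z)] at hstep
  have hbr : dbar (deeR w) z = ((lapHat w z : ℝ) : ℂ) := dbar_deeR hw z
  have hde : dee (fun y => ((w y : ℝ) : ℂ)) z = deeR w z := rfl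
  rw [hbr, hde] at hstep
  -- now hstep : complicated = (lapHat G z : ℂ); take ofReal of RHS goal and use injectivity
  apply Complex.ofReal_injective
  rw [← hstep]
  have hKK : (starRingEnd ℂ) (deriv F z + F z * deeR w z) * (deriv F z + F z * deeR w z)
      = ((Complex.normSq (deriv F z + F z * deeR w z) : ℝ) : ℂ) := by
    rw [mul_comm, Complex.mul_conj]
  have hFF : F z * (starRingEnd ℂ) (F z) = ((Complex.normSq (F z) : ℝ) : ℂ) :=
    Complex.mul_conj (F z)
  push_cast
  rw [← hKK, ← hFF]
  simp only [map_add, map_mul, map_zero, Complex.conj_ofReal]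
  ring
end Key
section Div

lemma contDiff_one_fderiv_apply {E : Type*} [NormedAddCommGroup E] [NormedSpace ℝ E]
    {f : ℂ → E} (hf : ContDiff ℝ 1 f) (v : ℂ) :
    Continuous (fun z => fderiv ℝ f z v) := by
  have h1 : (1 : WithTop ℕ∞) = ((0 : ℕ∞) : WithTop ℕ∞) + 1 := by norm_num
  exact (cd_fderiv_apply (h1 ▸ hf) v).continuous

lemma integral_divergence_zero (A B : ℂ → ℝ) (hA : ContDiff ℝ 1 A) (hB : ContDiff ℝ 1 B)
    (hsA : HasCompactSupport A) (hsB : HasCompactSupport B) :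
    ∫ z : ℂ, (fderiv ℝ A z 1 + fderiv ℝ B z Complex.I) = 0 := by
  obtain ⟨R, hR0, hRs⟩ : ∃ R, 0 < R ∧ tsupport A ∪ tsupport B ⊆ Metric.ball 0 R :=
    (hsA.isBounded.union hsB.isBounded).subset_ball_lt 0 0
  set Lc : ℝ × ℝ →L[ℝ] ℂ := Complex.equivRealProdCLM.symm.toContinuousLinearMap with hLc
  have hLcapp : ∀ p : ℝ × ℝ, Lc p = p.1 + p.2 * Complex.I := fun p =>
    Complex.equivRealProdCLM_symm_apply p
  have h10 : Lc (1, 0) = 1 := by rw [hLcapp]; simp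
  have h01 : Lc (0, 1) = Complex.I := by rw [hLcapp]; simp
  have hAd : Differentiable ℝ A := hA.differentiable one_ne_zero
  have hBd : Differentiable ℝ B := hB.differentiable one_ne_zero
  set g : ℂ → ℝ := fun z => fderiv ℝ A z 1 + fderiv ℝ B z Complex.I with hg
  have hgc : Continuous g :=
    (contDiff_one_fderiv_apply hA 1).add (contDiff_one_fderiv_apply hB Complex.I)
  have hg0 : ∀ z : ℂ, z ∉ Metric.ball (0 : ℂ) R → g z = 0 := by
    intro z hz
    have hzA : z ∉ tsupport A := fun h => hz (hRs (Set.mem_union_left _ h))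
    have hzB : z ∉ tsupport B := fun h => hz (hRs (Set.mem_union_right _ h))
    have dA0 : fderiv ℝ A z = 0 := by
      by_contra h
      exact hzA (support_fderiv_subset ℝ (by simpa [Function.mem_support] using h))
    have dB0 : fderiv ℝ B z = 0 := by
      by_contra h
      exact hzB (support_fderiv_subset ℝ (by simpa [Function.mem_support] using h))
    simp [hg, dA0, dB0]
  have hout : ∀ p : ℝ × ℝ, R ≤ |p.1| ∨ R ≤ |p.2| → Lc p ∉ Metric.ball (0 : ℂ) R := by
    intro p hp hmem
    rw [Metric.mem_ball, dist_zero_right] at hmem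
    have hrep : (Lc p).re = p.1 := by rw [hLcapp]; simp
    have himp : (Lc p).im = p.2 := by rw [hLcapp]; simp
    rcases hp with h | h
    · have := Complex.abs_re_le_norm (Lc p)
      rw [hrep] at this; linarith
    · have := Complex.abs_im_le_norm (Lc p)
      rw [himp] at this; linarith
  have hA0 : ∀ p : ℝ × ℝ, R ≤ |p.1| ∨ R ≤ |p.2| → A (Lc p) = 0 := fun p hp =>
    image_eq_zero_of_notMem_tsupport fun h =>
      hout p hp (hRs (Set.mem_union_left _ h))
  have hB0 : ∀ p : ℝ × ℝ, R ≤ |p.1| ∨ R ≤ |p.2| → B (Lc p) = 0 := fun p hp =>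
    image_eq_zero_of_notMem_tsupport fun h =>
      hout p hp (hRs (Set.mem_union_right _ h))
  have hfun2 : ∀ p : ℝ × ℝ, ((fderiv ℝ A (Lc p)).comp Lc) (1, 0)
      + ((fderiv ℝ B (Lc p)).comp Lc) (0, 1) = g (Lc p) := by
    intro p
    simp [hg, ContinuousLinearMap.comp_apply, h10, h01]
  have hdiv := MeasureTheory.integral2_divergence_prod_of_hasFDerivAt_off_countable
    (fun p => A (Lc p)) (fun p => B (Lc p))
    (fun p => (fderiv ℝ A (Lc p)).comp Lc) (fun p => (fderiv ℝ B (Lc p)).comp Lc)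
    (-R) (-R) R R ∅ Set.countable_empty
    ((hA.continuous.comp Lc.continuous).continuousOn)
    ((hB.continuous.comp Lc.continuous).continuousOn)
    (fun p _ => ((hAd (Lc p)).hasFDerivAt.comp p Lc.hasFDerivAt))
    (fun p _ => ((hBd (Lc p)).hasFDerivAt.comp p Lc.hasFDerivAt))
    (by
      have : (fun p : ℝ × ℝ => ((fderiv ℝ A (Lc p)).comp Lc) (1, 0)
          + ((fderiv ℝ B (Lc p)).comp Lc) (0, 1)) = fun p => g (Lc p) := funext hfun2
      rw [this]
      exact (hgc.comp Lc.continuous).continuousOn.integrableOn_compact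
        (isCompact_uIcc.prod isCompact_uIcc))
  -- boundary terms vanish
  have hb1 : (∫ x in (-R)..R, B (Lc (x, R))) = 0 := by
    rw [intervalIntegral.integral_congr (g := fun _ => (0:ℝ))
      (fun x _ => hB0 (x, R) (Or.inr (by simp [abs_of_pos hR0])))]
    simp
  have hb2 : (∫ x in (-R)..R, B (Lc (x, -R))) = 0 := by
    rw [intervalIntegral.integral_congr (g := fun _ => (0:ℝ))
      (fun x _ => hB0 (x, -R) (Or.inr (by simp [abs_of_pos hR0])))]
    simp
  have hb3 : (∫ y in (-R)..R, A (Lc (R, y))) = 0 := by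
    rw [intervalIntegral.integral_congr (g := fun _ => (0:ℝ))
      (fun y _ => hA0 (R, y) (Or.inl (by simp [abs_of_pos hR0])))]
    simp
  have hb4 : (∫ y in (-R)..R, A (Lc (-R, y))) = 0 := by
    rw [intervalIntegral.integral_congr (g := fun _ => (0:ℝ))
      (fun y _ => hA0 (-R, y) (Or.inl (by simp [abs_of_pos hR0])))]
    simp
  simp_rw [hfun2] at hdiv
  rw [hb1, hb2, hb3, hb4] at hdiv
  -- identify LHS with the integral over ℂ
  have hIoc : ∀ (H : ℝ → ℝ), (∫ x in (-R)..R, H x) = ∫ x in Set.Icc (-R) R, H x := by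
    intro H
    rw [intervalIntegral.integral_of_le (by linarith : (-R) ≤ R),
      setIntegral_congr_set Ioc_ae_eq_Icc]
  have hInt : IntegrableOn (fun p : ℝ × ℝ => g (Lc p)) (Set.Icc (-R) R ×ˢ Set.Icc (-R) R) :=
    (hgc.comp Lc.continuous).continuousOn.integrableOn_compact
      (isCompact_Icc.prod isCompact_Icc)
  have e4 : (∫ p in Set.Icc (-R) R ×ˢ Set.Icc (-R) R, g (Lc p))
      = ∫ x in Set.Icc (-R) R, ∫ y in Set.Icc (-R) R, g (Lc (x, y)) :=
    setIntegral_prod _ hInt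
  have e5 : (∫ x in (-R)..R, ∫ y in (-R)..R, g (Lc (x, y)))
      = ∫ p in Set.Icc (-R) R ×ˢ Set.Icc (-R) R, g (Lc p) := by
    rw [e4, hIoc]
    apply setIntegral_congr_fun measurableSet_Icc
    intro x _
    exact hIoc _
  have e2 : (∫ p in Set.Icc (-R) R ×ˢ Set.Icc (-R) R, g (Lc p)) = ∫ p : ℝ × ℝ, g (Lc p) := by
    rw [Set.Icc_prod_Icc]
    apply setIntegral_eq_integral_of_forall_compl_eq_zero
    intro p hp
    apply hg0 _ (hout p _)
    rw [Set.mem_Icc] at hp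
    push_neg at hp
    rcases le_or_gt (-R) p.1 with h1 | h1
    · rcases le_or_gt (-R) p.2 with h2 | h2
      · have hle : ((-R : ℝ), (-R : ℝ)) ≤ p := Prod.mk_le_mk.mpr ⟨h1, h2⟩
        have := hp hle
        rw [Prod.mk_le_mk, not_and_or] at this
        rcases this with h | h
        · exact Or.inl (le_abs.mpr (Or.inl (le_of_lt (not_le.mp h))))
        · exact Or.inr (le_abs.mpr (Or.inl (le_of_lt (not_le.mp h))))
      · exact Or.inr (le_abs.mpr (Or.inr (by linarith)))
    · exact Or.inl (le_abs.mpr (Or.inr (by linarith)))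
  have e1 : (∫ p : ℝ × ℝ, g (Lc p)) = ∫ z : ℂ, g z := by
    have hmp := (Complex.volume_preserving_equiv_real_prod.symm Complex.measurableEquivRealProd)
    have := hmp.integral_comp' (f := Complex.measurableEquivRealProd.symm) g
    rw [← this]
    rfl
  rw [e5, e2, e1] at hdiv
  simpa using hdiv

end Div
section Green

lemma contDiff_lapHat {n : WithTop ℕ∞} {φ : ℂ → ℝ} (hφ : ContDiff ℝ (n + 1 + 1) φ) :
    ContDiff ℝ n (lapHat φ) := by
  have hx : ContDiff ℝ (n + 1) (fun w => fderiv ℝ φ w 1) := cd_fderiv_apply hφ 1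
  have hy : ContDiff ℝ (n + 1) (fun w => fderiv ℝ φ w Complex.I) := cd_fderiv_apply hφ Complex.I
  exact ((cd_fderiv_apply hx 1).add (cd_fderiv_apply hy Complex.I)).div_const 4

lemma tsupport_fderiv_apply_subset' {ψ : ℂ → ℝ} (v : ℂ) :
    tsupport (fun w => fderiv ℝ ψ w v) ⊆ tsupport ψ := by
  apply closure_minimal _ (isClosed_tsupport ψ)
  intro x hx
  rw [Function.mem_support] at hx
  exact support_fderiv_subset ℝ (Function.mem_support.mpr (fun hc => hx (by simp [hc])))

lemma lapHat_eq_zero_of_nmem {ψ : ℂ → ℝ} {z : ℂ} (h : z ∉ tsupport ψ) : lapHat ψ z = 0 := by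
  have h2 : ∀ v u : ℂ, fderiv ℝ (fun w => fderiv ℝ ψ w v) z u = 0 := by
    intro v u
    have hz : fderiv ℝ (fun w => fderiv ℝ ψ w v) z = 0 := by
      by_contra hc
      exact (fun hv => h (tsupport_fderiv_apply_subset' v hv))
        (support_fderiv_subset ℝ (Function.mem_support.mpr hc))
    simp [hz]
  simp [lapHat, h2]

lemma green (G ψ : ℂ → ℝ) (hG : ContDiff ℝ 2 G) (hψ : ContDiff ℝ 2 ψ)
    (hsψ : HasCompactSupport ψ) :
    ∫ z : ℂ, G z * lapHat ψ z = ∫ z : ℂ, ψ z * lapHat G z := by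
  have h2 : (2 : WithTop ℕ∞) = 1 + 1 := by norm_num
  have hGx : ContDiff ℝ 1 (fun w => fderiv ℝ G w 1) := cd_fderiv_apply (h2 ▸ hG) 1
  have hGy : ContDiff ℝ 1 (fun w => fderiv ℝ G w Complex.I) := cd_fderiv_apply (h2 ▸ hG) Complex.I
  have hψx : ContDiff ℝ 1 (fun w => fderiv ℝ ψ w 1) := cd_fderiv_apply (h2 ▸ hψ) 1
  have hψy : ContDiff ℝ 1 (fun w => fderiv ℝ ψ w Complex.I) := cd_fderiv_apply (h2 ▸ hψ) Complex.I
  have hG1 : ContDiff ℝ 1 G := hG.of_le (by norm_num)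
  have hψ1 : ContDiff ℝ 1 ψ := hψ.of_le (by norm_num)
  set A : ℂ → ℝ := fun z => G z * fderiv ℝ ψ z 1 - ψ z * fderiv ℝ G z 1 with hAdef
  set B : ℂ → ℝ := fun z => G z * fderiv ℝ ψ z Complex.I - ψ z * fderiv ℝ G z Complex.I with hBdef
  have hA : ContDiff ℝ 1 A := (hG1.mul hψx).sub (hψ1.mul hGx)
  have hB : ContDiff ℝ 1 B := (hG1.mul hψy).sub (hψ1.mul hGy)
  have hzero : ∀ z ∉ tsupport ψ, (ψ z = 0 ∧ fderiv ℝ ψ z = 0) := by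
    intro z hz
    refine ⟨image_eq_zero_of_notMem_tsupport hz, ?_⟩
    by_contra hc
    exact hz (support_fderiv_subset ℝ (Function.mem_support.mpr hc))
  have hsA : HasCompactSupport A := HasCompactSupport.intro hsψ (by
    intro x hx
    obtain ⟨h1, h2'⟩ := hzero x hx
    simp [hAdef, h1, h2'])
  have hsB : HasCompactSupport B := HasCompactSupport.intro hsψ (by
    intro x hx
    obtain ⟨h1, h2'⟩ := hzero x hx
    simp [hBdef, h1, h2'])
  have hdivpt : ∀ z : ℂ, fderiv ℝ A z 1 + fderiv ℝ B z Complex.I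
      = G z * (4 * lapHat ψ z) - ψ z * (4 * lapHat G z) := by
    intro z
    have dG := (hG1.differentiable one_ne_zero z)
    have dψ := (hψ1.differentiable one_ne_zero z)
    have dGx := (hGx.differentiable one_ne_zero z)
    have dGy := (hGy.differentiable one_ne_zero z)
    have dψx := (hψx.differentiable one_ne_zero z)
    have dψy := (hψy.differentiable one_ne_zero z)
    have eA : fderiv ℝ A z = G z • fderiv ℝ (fun w => fderiv ℝ ψ w 1) z
        + fderiv ℝ ψ z 1 • fderiv ℝ G z
        - (ψ z • fderiv ℝ (fun w => fderiv ℝ G w 1) z + fderiv ℝ G z 1 • fderiv ℝ ψ z) := by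
      rw [hAdef]
      rw [fderiv_fun_sub (dG.fun_mul dψx) (dψ.fun_mul dGx), fderiv_fun_mul dG dψx, fderiv_fun_mul dψ dGx]
    have eB : fderiv ℝ B z = G z • fderiv ℝ (fun w => fderiv ℝ ψ w Complex.I) z
        + fderiv ℝ ψ z Complex.I • fderiv ℝ G z
        - (ψ z • fderiv ℝ (fun w => fderiv ℝ G w Complex.I) z
          + fderiv ℝ G z Complex.I • fderiv ℝ ψ z) := by
      rw [hBdef]
      rw [fderiv_fun_sub (dG.fun_mul dψy) (dψ.fun_mul dGy), fderiv_fun_mul dG dψy, fderiv_fun_mul dψ dGy]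
    rw [eA, eB]
    simp only [ContinuousLinearMap.add_apply, ContinuousLinearMap.sub_apply,
      ContinuousLinearMap.smul_apply, smul_eq_mul, lapHat]
    ring
  have hdiv := integral_divergence_zero A B hA hB hsA hsB
  rw [show (fun z : ℂ => fderiv ℝ A z 1 + fderiv ℝ B z Complex.I)
      = fun z : ℂ => G z * (4 * lapHat ψ z) - ψ z * (4 * lapHat G z)
    from funext hdivpt] at hdiv
  have hLψc : Continuous (lapHat ψ) := by
    have : ((0 : WithTop ℕ∞) + 1 + 1) = 2 := by norm_num
    exact (contDiff_lapHat (this ▸ hψ)).continuous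
  have hLGc : Continuous (lapHat G) := by
    have : ((0 : WithTop ℕ∞) + 1 + 1) = 2 := by norm_num
    exact (contDiff_lapHat (this ▸ hG)).continuous
  have hi1 : Integrable (fun z : ℂ => G z * (4 * lapHat ψ z)) := by
    apply Continuous.integrable_of_hasCompactSupport
      (hG.continuous.mul (continuous_const.mul hLψc))
    apply HasCompactSupport.intro hsψ
    intro x hx
    simp [lapHat_eq_zero_of_nmem hx]
  have hi2 : Integrable (fun z : ℂ => ψ z * (4 * lapHat G z)) := by
    apply Continuous.integrable_of_hasCompactSupport
      (hψ.continuous.mul (continuous_const.mul hLGc))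
    apply HasCompactSupport.intro hsψ
    intro x hx
    simp [image_eq_zero_of_notMem_tsupport hx]
  rw [integral_sub hi1 hi2, sub_eq_zero] at hdiv
  have e1 : ∫ z : ℂ, G z * (4 * lapHat ψ z) = 4 * ∫ z : ℂ, G z * lapHat ψ z := by
    rw [← integral_const_mul]
    congr 1; funext z; ring
  have e2 : ∫ z : ℂ, ψ z * (4 * lapHat G z) = 4 * ∫ z : ℂ, ψ z * lapHat G z := by
    rw [← integral_const_mul]
    congr 1; funext z; ring
  rw [e1, e2] at hdiv
  linarith

end Green
section Cutoff

lemma lap_zero_of_integrable (G : ℂ → ℝ) (hG : ContDiff ℝ 2 G) (hGpos : ∀ z, 0 ≤ G z)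
    (hlap : ∀ z, 0 ≤ lapHat G z) (hint : Integrable G volume) :
    ∀ z, lapHat G z = 0 := by
  classical
  set c : ContDiffBump (0 : ℂ) := ⟨1, 2, one_pos, one_lt_two⟩ with hc
  set ψ : ℂ → ℝ := fun z => c z with hψdef
  have hψC : ContDiff ℝ 2 ψ := c.contDiff
  have hψcs : HasCompactSupport ψ := c.hasCompactSupport
  have h02 : ((0 : WithTop ℕ∞) + 1 + 1) = 2 := by norm_num
  have h2 : (2 : WithTop ℕ∞) = 1 + 1 := by norm_num
  have hLψc : Continuous (lapHat ψ) := (contDiff_lapHat (h02 ▸ hψC)).continuous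
  have hLψcs : HasCompactSupport (lapHat ψ) :=
    HasCompactSupport.intro hψcs fun x hx => lapHat_eq_zero_of_nmem hx
  obtain ⟨C, hC⟩ := hLψcs.exists_bound_of_continuous hLψc
  have hLGc : Continuous (lapHat G) := (contDiff_lapHat (h02 ▸ hG)).continuous
  have hψx : ContDiff ℝ 1 (fun w => fderiv ℝ ψ w 1) := cd_fderiv_apply (h2 ▸ hψC) 1
  have hψy : ContDiff ℝ 1 (fun w => fderiv ℝ ψ w Complex.I) := cd_fderiv_apply (h2 ▸ hψC) Complex.I
  have key : ∀ ρ : ℝ, (∫ z in Metric.closedBall (0:ℂ) ρ, lapHat G z) ≤ 0 := by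
    intro ρ
    have hbound : ∀ R : ℝ, max ρ 1 ≤ R →
        (∫ z in Metric.closedBall (0:ℂ) ρ, lapHat G z) ≤ C * (∫ z : ℂ, G z) * (R⁻¹)^2 := by
      intro R hR
      have hR1 : (1:ℝ) ≤ R := le_trans (le_max_right _ _) hR
      have hR0 : 0 < R := lt_of_lt_of_le one_pos hR1
      have hρR : ρ ≤ R := le_trans (le_max_left _ _) hR
      set ψR : ℂ → ℝ := fun z => c (R⁻¹ • z) with hψRdef
      have hSc : ContDiff ℝ 2 (fun z : ℂ => R⁻¹ • z) := contDiff_id.const_smul R⁻¹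
      have hψRC : ContDiff ℝ 2 ψR := hψC.comp hSc
      have hψRcs : HasCompactSupport ψR := by
        apply HasCompactSupport.intro (isCompact_closedBall (0:ℂ) (2*R))
        intro x hx
        apply c.zero_of_le_dist
        rw [dist_zero_right, norm_smul, norm_inv, Real.norm_eq_abs, abs_of_pos hR0]
        rw [Metric.mem_closedBall, dist_zero_right, not_le] at hx
        rw [show c.rOut = 2 from rfl]
        have h1 : R⁻¹ * (2 * R) ≤ R⁻¹ * ‖x‖ :=
          mul_le_mul_of_nonneg_left hx.le (inv_nonneg.mpr hR0.le)
        have h2 : R⁻¹ * (2 * R) = 2 := by field_simp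
        linarith
      have hS : ∀ z : ℂ, HasFDerivAt (fun z : ℂ => R⁻¹ • z)
          (R⁻¹ • ContinuousLinearMap.id ℝ ℂ) z := fun z => (hasFDerivAt_id z).const_smul R⁻¹
      have hfd1 : ∀ (z v : ℂ), fderiv ℝ ψR z v = R⁻¹ * fderiv ℝ ψ (R⁻¹ • z) v := by
        intro z v
        have hF : HasFDerivAt ψR
            ((fderiv ℝ ψ (R⁻¹ • z)).comp (R⁻¹ • ContinuousLinearMap.id ℝ ℂ)) z :=
          (hψC.differentiable (by norm_num) (R⁻¹ • z)).hasFDerivAt.comp z (hS z)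
        rw [hF.fderiv]
        simp only [ContinuousLinearMap.coe_comp', Function.comp_apply,
          ContinuousLinearMap.coe_smul', Pi.smul_apply, ContinuousLinearMap.coe_id', id_eq,
          _root_.map_smul, smul_eq_mul]
      have hfd2 : ∀ (v : ℂ), Differentiable ℝ (fun t => fderiv ℝ ψ t v) → ∀ (z u : ℂ),
          fderiv ℝ (fun y => fderiv ℝ ψR y v) z u
          = R⁻¹ * (R⁻¹ * fderiv ℝ (fun y => fderiv ℝ ψ y v) (R⁻¹ • z) u) := by
        intro v hdv z u
        have hfe : (fun y => fderiv ℝ ψR y v)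
            = fun y => R⁻¹ * fderiv ℝ ψ (R⁻¹ • y) v := funext fun y => hfd1 y v
        rw [hfe]
        have hdcomp : DifferentiableAt ℝ (fun y : ℂ => fderiv ℝ ψ (R⁻¹ • y) v) z :=
          ((hdv (R⁻¹ • z)).hasFDerivAt.comp z (hS z)).differentiableAt
        rw [fderiv_const_mul hdcomp]
        have hF2 : HasFDerivAt (fun y : ℂ => fderiv ℝ ψ (R⁻¹ • y) v)
            ((fderiv ℝ (fun t => fderiv ℝ ψ t v) (R⁻¹ • z)).comp
              (R⁻¹ • ContinuousLinearMap.id ℝ ℂ)) z :=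
          (hdv (R⁻¹ • z)).hasFDerivAt.comp z (hS z)
        rw [hF2.fderiv]
        simp only [ContinuousLinearMap.coe_smul', Pi.smul_apply, smul_eq_mul,
          ContinuousLinearMap.coe_comp', Function.comp_apply, ContinuousLinearMap.coe_id',
          id_eq, _root_.map_smul]
      have hlapψR : ∀ z : ℂ, lapHat ψR z = (R⁻¹)^2 * lapHat ψ (R⁻¹ • z) := by
        intro z
        simp only [lapHat, hfd2 1 (hψx.differentiable one_ne_zero) z 1,
          hfd2 Complex.I (hψy.differentiable one_ne_zero) z Complex.I]
        ring
      have hψR1 : ∀ z ∈ Metric.closedBall (0:ℂ) ρ, ψR z = 1 := by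
        intro z hz
        apply c.one_of_mem_closedBall
        rw [Metric.mem_closedBall, dist_zero_right] at hz ⊢
        rw [norm_smul, norm_inv, Real.norm_eq_abs, abs_of_pos hR0,
          show c.rIn = 1 from rfl]
        have h1 : ‖z‖ ≤ R := le_trans hz hρR
        have h3 : R⁻¹ * ‖z‖ ≤ R⁻¹ * R :=
          mul_le_mul_of_nonneg_left h1 (inv_nonneg.mpr hR0.le)
        rwa [inv_mul_cancel₀ hR0.ne'] at h3
      have hiψRlapG : Integrable (fun z : ℂ => ψR z * lapHat G z) := by
        apply Continuous.integrable_of_hasCompactSupport (hψRC.continuous.mul hLGc)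
        apply HasCompactSupport.intro hψRcs
        intro x hx
        rw [Pi.mul_apply, image_eq_zero_of_notMem_tsupport hx, zero_mul]
      have hmono1 : (∫ z in Metric.closedBall (0:ℂ) ρ, lapHat G z)
          ≤ ∫ z : ℂ, ψR z * lapHat G z := by
        have e1 : (∫ z in Metric.closedBall (0:ℂ) ρ, lapHat G z)
            = ∫ z in Metric.closedBall (0:ℂ) ρ, ψR z * lapHat G z := by
          apply setIntegral_congr_fun measurableSet_closedBall
          intro x hx
          show lapHat G x = ψR x * lapHat G x
          rw [hψR1 x hx, one_mul]
        rw [e1]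
        apply setIntegral_le_integral hiψRlapG
        filter_upwards with x
        exact mul_nonneg c.nonneg (hlap x)
      have hgreen := green G ψR hG hψRC hψRcs
      have hmono2 : (∫ z : ℂ, G z * lapHat ψR z) ≤ C * (∫ z : ℂ, G z) * (R⁻¹)^2 := by
        have hptw : ∀ z : ℂ, G z * lapHat ψR z ≤ (C * (R⁻¹)^2) * G z := by
          intro z
          rw [hlapψR z]
          have h1 : lapHat ψ (R⁻¹ • z) ≤ C :=
            le_trans (le_abs_self _) (by simpa [Real.norm_eq_abs] using hC (R⁻¹ • z))
          calc G z * ((R⁻¹)^2 * lapHat ψ (R⁻¹ • z)) ≤ G z * ((R⁻¹)^2 * C) := by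
                apply mul_le_mul_of_nonneg_left _ (hGpos z)
                exact mul_le_mul_of_nonneg_left h1 (by positivity)
            _ = (C * (R⁻¹)^2) * G z := by ring
        have hiL : Integrable (fun z : ℂ => G z * lapHat ψR z) := by
          apply Continuous.integrable_of_hasCompactSupport
            (hG.continuous.mul (contDiff_lapHat (h02 ▸ hψRC)).continuous)
          apply HasCompactSupport.intro hψRcs
          intro x hx
          rw [Pi.mul_apply, lapHat_eq_zero_of_nmem hx, mul_zero]
        calc (∫ z : ℂ, G z * lapHat ψR z) ≤ ∫ z : ℂ, (C * (R⁻¹)^2) * G z :=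
              integral_mono hiL (hint.const_mul _) hptw
          _ = C * (∫ z : ℂ, G z) * (R⁻¹)^2 := by rw [integral_const_mul]; ring
      calc (∫ z in Metric.closedBall (0:ℂ) ρ, lapHat G z)
          ≤ ∫ z : ℂ, ψR z * lapHat G z := hmono1
        _ = ∫ z : ℂ, G z * lapHat ψR z := hgreen.symm
        _ ≤ C * (∫ z : ℂ, G z) * (R⁻¹)^2 := hmono2
    have htend : Tendsto (fun R : ℝ => C * (∫ z : ℂ, G z) * (R⁻¹)^2) atTop (𝓝 0) := by
      have h0 : Tendsto (fun R : ℝ => (R⁻¹)^2) atTop (𝓝 0) := by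
        have h0' : Tendsto (fun R : ℝ => R⁻¹) atTop (𝓝 (0:ℝ)) := tendsto_inv_atTop_zero
        simpa using h0'.pow 2
      have := h0.const_mul (C * (∫ z : ℂ, G z))
      simpa using this
    exact ge_of_tendsto htend ((eventually_ge_atTop (max ρ 1)).mono fun R hR => hbound R hR)
  intro z₀
  by_contra hne
  have hpos : 0 < lapHat G z₀ := lt_of_le_of_ne (hlap z₀) (Ne.symm hne)
  obtain ⟨δ, hδ0, hδ⟩ : ∃ δ > 0, ∀ x ∈ Metric.ball z₀ δ, lapHat G z₀ / 2 ≤ lapHat G x := by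
    obtain ⟨δ, hδ0, hδ⟩ := Metric.continuousAt_iff.mp hLGc.continuousAt (lapHat G z₀ / 2)
      (by positivity)
    refine ⟨δ, hδ0, fun x hx => ?_⟩
    have h1 := hδ (Metric.mem_ball.mp hx)
    rw [Real.dist_eq] at h1
    have h3 := abs_lt.mp h1
    linarith [h3.1]
  set ρ := ‖z₀‖ + δ with hρdef
  have hsub : Metric.ball z₀ δ ⊆ Metric.closedBall (0:ℂ) ρ := by
    intro x hx
    rw [Metric.mem_ball] at hx
    rw [Metric.mem_closedBall, dist_zero_right]
    have h1 : ‖x‖ - ‖z₀‖ ≤ ‖x - z₀‖ := norm_sub_norm_le x z₀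
    rw [← dist_eq_norm] at h1
    rw [hρdef]
    linarith
  have hiOn : IntegrableOn (lapHat G) (Metric.closedBall (0:ℂ) ρ) :=
    hLGc.continuousOn.integrableOn_compact (isCompact_closedBall _ _)
  have hIballδ : (lapHat G z₀ / 2) * (volume (Metric.ball z₀ δ)).toReal
      ≤ ∫ x in Metric.ball z₀ δ, lapHat G x :=
    setIntegral_ge_of_const_le_real measurableSet_ball measure_ball_lt_top.ne
      (fun x hx => hδ x hx) (hiOn.mono_set hsub)
  have hmono : (∫ x in Metric.ball z₀ δ, lapHat G x)
      ≤ ∫ x in Metric.closedBall (0:ℂ) ρ, lapHat G x := by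
    apply setIntegral_mono_set hiOn
    · filter_upwards with x
      exact hlap x
    · exact HasSubset.Subset.eventuallyLE hsub
  have hvol : 0 < (volume (Metric.ball z₀ δ)).toReal :=
    ENNReal.toReal_pos (Metric.measure_ball_pos volume z₀ hδ0).ne' measure_ball_lt_top.ne
  have hk := key ρ
  nlinarith
end Cutoff

theorem stmt6 (φ : ℂ → ℝ) (hφ : ContDiff ℝ 4 φ) (hpos : ∀ z, 0 < lapHat φ z)
    (hcurv : ∀ z, -2 ≤ (lapHat φ z)⁻¹ * lapHat (fun w => Real.log (lapHat φ w)) z)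
    (F : ℂ → ℂ) (hF : Differentiable ℂ F)
    (hint : Integrable (fun z => ‖F z‖ ^ 2 * Real.exp (2 * φ z) * lapHat φ z) volume) :
    ∀ z, F z = 0 := by
  classical
  have hφ2 : ContDiff ℝ 2 φ := hφ.of_le (by norm_num)
  have hlapφC2 : ContDiff ℝ 2 (lapHat φ) :=
    contDiff_lapHat ((show ((2:WithTop ℕ∞)+1+1) = 4 by norm_num) ▸ hφ)
  have hL : ContDiff ℝ 2 (fun z => Real.log (lapHat φ z)) :=
    hlapφC2.log (fun z => (hpos z).ne')
  set w : ℂ → ℝ := fun z => 2 * φ z + Real.log (lapHat φ z) with hwdef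
  have hw : ContDiff ℝ 2 w := (contDiff_const.mul hφ2).add hL
  have h2 : (2 : WithTop ℕ∞) = 1 + 1 := by norm_num
  -- linearity of lapHat on w
  have hlapw : ∀ z, lapHat w z
      = 2 * lapHat φ z + lapHat (fun y => Real.log (lapHat φ y)) z := by
    intro z
    have hdφ : Differentiable ℝ φ := hφ2.differentiable (by norm_num)
    have hdL : Differentiable ℝ (fun y => Real.log (lapHat φ y)) :=
      hL.differentiable (by norm_num)
    have hfd1 : ∀ (y v : ℂ), fderiv ℝ w y v
        = 2 * fderiv ℝ φ y v + fderiv ℝ (fun t => Real.log (lapHat φ t)) y v := by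
      intro y v
      rw [hwdef]
      rw [fderiv_fun_add ((hdφ y).const_mul 2) (hdL y), fderiv_const_mul (hdφ y)]
      simp
    have hdφx : ∀ v : ℂ, Differentiable ℝ (fun y => fderiv ℝ φ y v) := fun v =>
      (cd_fderiv_apply (h2 ▸ hφ2) v).differentiable one_ne_zero
    have hdLx : ∀ v : ℂ, Differentiable ℝ (fun y => fderiv ℝ (fun t => Real.log (lapHat φ t)) y v) :=
      fun v => (cd_fderiv_apply (h2 ▸ hL) v).differentiable one_ne_zero
    have hfd2 : ∀ (v : ℂ), fderiv ℝ (fun y => fderiv ℝ w y v) z v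
        = 2 * fderiv ℝ (fun y => fderiv ℝ φ y v) z v
          + fderiv ℝ (fun y => fderiv ℝ (fun t => Real.log (lapHat φ t)) y v) z v := by
      intro v
      have he : (fun y => fderiv ℝ w y v)
          = fun y => 2 * fderiv ℝ φ y v
            + fderiv ℝ (fun t => Real.log (lapHat φ t)) y v := funext fun y => hfd1 y v
      rw [he, fderiv_fun_add ((hdφx v z).const_mul 2) (hdLx v z), fderiv_const_mul (hdφx v z)]
      simp
    simp only [lapHat, hfd2 1, hfd2 Complex.I]
    ring
  have hlapw0 : ∀ z, 0 ≤ lapHat w z := by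
    intro z
    have hp := hpos z
    have hcz := hcurv z
    have hmul := mul_le_mul_of_nonneg_left hcz hp.le
    rw [← mul_assoc, mul_inv_cancel₀ hp.ne', one_mul] at hmul
    rw [hlapw z]
    linarith
  set G : ℂ → ℝ := fun z => ‖F z‖ ^ 2 * Real.exp (w z) with hGdef
  have hGeq : G = fun z => ‖F z‖ ^ 2 * Real.exp (2 * φ z) * lapHat φ z := by
    funext z
    rw [hGdef]
    show ‖F z‖ ^ 2 * Real.exp (2 * φ z + Real.log (lapHat φ z)) = _
    rw [Real.exp_add, Real.exp_log (hpos z)]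
    ring
  have hGint : Integrable G volume := by rw [hGeq]; exact hint
  have hG2 : ContDiff ℝ 2 G := hG2_aux hw hF
  have hGpos : ∀ z, 0 ≤ G z := fun z =>
    mul_nonneg (pow_nonneg (norm_nonneg _) 2) (Real.exp_pos _).le
  have hlapG : ∀ z, lapHat G z
      = Real.exp (w z) * (Complex.normSq (deriv F z + F z * deeR w z)
        + Complex.normSq (F z) * lapHat w z) := fun z => key_lap hw hF z
  have hlapGpos : ∀ z, 0 ≤ lapHat G z := by
    intro z
    rw [hlapG z]
    exact mul_nonneg (Real.exp_pos _).le (add_nonneg (Complex.normSq_nonneg _)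
      (mul_nonneg (Complex.normSq_nonneg _) (hlapw0 z)))
  have hzero := lap_zero_of_integrable G hG2 hGpos hlapGpos hGint
  have hK0 : ∀ z, deriv F z + F z * deeR w z = 0 := by
    intro z
    have h := hzero z
    rw [hlapG z] at h
    have hexp := Real.exp_pos (w z)
    have hn1 := Complex.normSq_nonneg (deriv F z + F z * deeR w z)
    have hn2 := mul_nonneg (Complex.normSq_nonneg (F z)) (hlapw0 z)
    have hsum : Complex.normSq (deriv F z + F z * deeR w z)
        + Complex.normSq (F z) * lapHat w z = 0 := by
      by_contra hc
      have : 0 < Complex.normSq (deriv F z + F z * deeR w z)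
          + Complex.normSq (F z) * lapHat w z :=
        lt_of_le_of_ne (add_nonneg hn1 hn2) (Ne.symm hc)
      nlinarith
    have : Complex.normSq (deriv F z + F z * deeR w z) = 0 := by linarith
    exact Complex.normSq_eq_zero.mp this
  have hdbar0 : ∀ z, dbarR G z = 0 := by
    intro z
    rw [hGdef]
    rw [key_dbar hw hF z, hK0 z]
    simp
  have hGd : Differentiable ℝ G := hG2.differentiable (by norm_num)
  have hfd0 : ∀ z, fderiv ℝ G z = 0 := by
    intro z
    have hpt : dbarR G z = (((fderiv ℝ G z 1 : ℝ) : ℂ)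
        + Complex.I * ((fderiv ℝ G z Complex.I : ℝ) : ℂ)) / 2 := by
      rw [dbarR_eq hGd]
    have h := hdbar0 z
    rw [hpt] at h
    rw [div_eq_zero_iff] at h
    have h2' : ((fderiv ℝ G z 1 : ℝ) : ℂ)
        + Complex.I * ((fderiv ℝ G z Complex.I : ℝ) : ℂ) = 0 := by
      rcases h with h | h
      · exact h
      · norm_num at h
    have ha : fderiv ℝ G z 1 = 0 := by
      have := congrArg Complex.re h2'
      simpa using this
    have hb : fderiv ℝ G z Complex.I = 0 := by
      have := congrArg Complex.im h2'
      simpa using this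
    apply ContinuousLinearMap.ext
    intro v
    have hv : v = v.re • (1 : ℂ) + v.im • Complex.I := by
      simp [Complex.real_smul]
    calc fderiv ℝ G z v = fderiv ℝ G z (v.re • (1:ℂ) + v.im • Complex.I) := by rw [← hv]
      _ = v.re • fderiv ℝ G z 1 + v.im • fderiv ℝ G z Complex.I := by
          rw [map_add, (fderiv ℝ G z).map_smul, (fderiv ℝ G z).map_smul]
      _ = (0 : ℂ →L[ℝ] ℝ) v := by rw [ha, hb]; simp
  have hconst : ∀ z, G z = G 0 := fun z =>
    is_const_of_fderiv_eq_zero hGd hfd0 z 0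
  have hG00 : G 0 = 0 := by
    have hic : Integrable (fun _ : ℂ => G 0) volume := by
      apply hGint.congr
      filter_upwards with z
      exact hconst z
    rw [integrable_const_iff] at hic
    rcases hic with h | h
    · exact h
    · exfalso
      rw [isFiniteMeasure_iff, MeasureTheory.measure_univ_of_isAddLeftInvariant] at h
      exact (lt_irrefl _) h
  intro z
  have hGz : G z = 0 := (hconst z).trans hG00
  rw [hGdef] at hGz
  have : ‖F z‖ ^ 2 * Real.exp (w z) = 0 := hGz
  have hne := (Real.exp_pos (w z)).ne'
  have : ‖F z‖ ^ 2 = 0 := by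
    rcases mul_eq_zero.mp this with h | h
    · exact h
    · exact absurd h hne
  have : ‖F z‖ = 0 := by
    have := pow_eq_zero_iff (n := 2) (by norm_num) |>.mp this
    exact this
  exact norm_eq_zero.mp this
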